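/- arXiv:2203.04580 — 3 statements merged into one kernel-verified Lean document; each statement's English description precedes it below -/
import Mathlib

section
/- For g > 0, b > 0 fixed, and δ* ∈ ℝ with |δ*| < π/2, and any β with 0 < β < π - 2|δ*|: if α ≥ g·tan(|δ*| + β/2)/b, then the interval [δ* - β, δ* + β] is contained in the interval [-π + 2γ - δ*, π - 2γ - δ*], where γ = arctan(g/(bα)). -/
open Real

theorem stmt_6 (g b : ℝ) (hg : 0 < g) (hb : 0 < b)
    (δs : ℝ) (hδs : |δs| < Real.pi / 2)
    (β : ℝ) (hβ : 0 < β) (hβ2 : β < Real.pi - 2 * |δs|)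
    (α : ℝ) (hα : g * Real.tan (|δs| + β / 2) / b ≤ α) :
    Set.Icc (δs - β) (δs + β) ⊆
      Set.Icc (-Real.pi + 2 * Real.arctan (g / (b * α)) - δs)
        (Real.pi - 2 * Real.arctan (g / (b * α)) - δs) := by
  set θ := |δs| + β / 2 with hθ
  have hθ0 : 0 < θ := by positivity
  have hθlt : θ < Real.pi / 2 := by
    have := abs_nonneg δs
    simp only [hθ]; linarith
  have htan : 0 < Real.tan θ := Real.tan_pos_of_pos_of_lt_pi_div_two hθ0 hθlt
  have hα0 : 0 < α := lt_of_lt_of_le (by positivity) hα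
  have hbα : g * Real.tan θ ≤ b * α := by
    have := (div_le_iff₀ hb).mp hα
    linarith [mul_comm α b]
  have hkey : g / (b * α) ≤ Real.tan (Real.pi / 2 - θ) := by
    rw [Real.tan_pi_div_two_sub]
    rw [inv_eq_one_div, div_le_div_iff₀ (by positivity) htan]
    linarith [mul_comm (b * α) (Real.tan θ), mul_comm g (Real.tan θ)]
  have hγ : Real.arctan (g / (b * α)) ≤ Real.pi / 2 - θ := by
    calc Real.arctan (g / (b * α)) ≤ Real.arctan (Real.tan (Real.pi / 2 - θ)) :=
          Real.arctan_strictMono.monotone hkey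
      _ = Real.pi / 2 - θ := Real.arctan_tan (by linarith [Real.pi_pos]) (sub_lt_self _ hθ0)
  have habs : δs ≤ |δs| ∧ -|δs| ≤ δs := ⟨le_abs_self δs, neg_abs_le δs⟩
  intro x hx
  obtain ⟨hx1, hx2⟩ := hx
  constructor
  · have : Real.arctan (g / (b * α)) ≤ Real.pi / 2 - |δs| - β / 2 := by
      simp only [hθ] at hγ; linarith
    linarith [habs.2]
  · have : Real.arctan (g / (b * α)) ≤ Real.pi / 2 - |δs| - β / 2 := by
      simp only [hθ] at hγ; linarith
    linarith [habs.1]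
end

section
/- Let g > 0, b > 0, α > 0, γ = arctan(g/(bα)), ε = 2α/√(g² + b²α²), and y(u) = (g - g·cos u)/(2α) + (b/2)·sin u. For any equilibrium u* ∈ [-π/2 + γ, π/2 + γ] and any u ∈ [-π + 2γ - u*, π + 2γ - u*], it holds that (u - u*)·(y(u) - y(u*)) ≥ ε·(y(u) - y(u*))². -/
open Real

lemma key_ineq_7 (d s : ℝ) (hd : |d| ≤ π) (hs : |s| ≤ π / 2) :
    (2 * d) * (2 * Real.cos s * Real.sin d) ≥ (2 * Real.cos s * Real.sin d) ^ 2 := by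
  obtain ⟨hd1, hd2⟩ := abs_le.mp hd
  obtain ⟨hs1, hs2⟩ := abs_le.mp hs
  have hc : 0 ≤ Real.cos s := Real.cos_nonneg_of_mem_Icc ⟨by linarith, hs2⟩
  have hc1 : Real.cos s ≤ 1 := Real.cos_le_one s
  have h1 : 0 ≤ Real.sin d * (d - Real.sin d) := by
    rcases le_or_gt 0 d with h | h
    · have hsn : 0 ≤ Real.sin d := Real.sin_nonneg_of_nonneg_of_le_pi h hd2
      have hle : Real.sin d ≤ d := Real.sin_le h
      nlinarith
    · have hsn : Real.sin d ≤ 0 := by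
        have := Real.sin_nonneg_of_nonneg_of_le_pi (by linarith : (0:ℝ) ≤ -d) (by linarith)
        simpa using this
      have hle : d ≤ Real.sin d := by
        have := Real.sin_le (by linarith : (0:ℝ) ≤ -d)
        simp only [Real.sin_neg] at this
        linarith
      nlinarith
  nlinarith [mul_nonneg hc h1,
    mul_nonneg (mul_nonneg hc (sub_nonneg.mpr hc1)) (sq_nonneg (Real.sin d))]

theorem stmt_7 (g b α : ℝ) (hg : 0 < g) (hb : 0 < b) (hα : 0 < α) :
    let γ := Real.arctan (g / (b * α))
    let ε := 2 * α / Real.sqrt (g ^ 2 + b ^ 2 * α ^ 2)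
    let y : ℝ → ℝ := fun u => (g - g * Real.cos u) / (2 * α) + (b / 2) * Real.sin u
    ∀ us ∈ Set.Icc (-(Real.pi / 2) + γ) (Real.pi / 2 + γ),
      ∀ u ∈ Set.Icc (-Real.pi + 2 * γ - us) (Real.pi + 2 * γ - us),
        (u - us) * (y u - y us) ≥ ε * (y u - y us) ^ 2 := by
  intro γ ε y us hus u hu
  obtain ⟨hus1, hus2⟩ := hus
  obtain ⟨hu1, hu2⟩ := hu
  have hba : 0 < b * α := mul_pos hb hα
  set S := Real.sqrt (g ^ 2 + b ^ 2 * α ^ 2) with hSdef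
  have hS2 : S ^ 2 = g ^ 2 + b ^ 2 * α ^ 2 := Real.sq_sqrt (by positivity)
  have hS : 0 < S := Real.sqrt_pos.mpr (by positivity)
  have hsq : Real.sqrt (1 + (g / (b * α)) ^ 2) = S / (b * α) := by
    rw [show 1 + (g / (b * α)) ^ 2 = (S / (b * α)) ^ 2 by
      field_simp
      nlinarith [hS2]]
    exact Real.sqrt_sq (by positivity)
  have hcγ : Real.cos γ = b * α / S := by
    rw [show γ = Real.arctan (g / (b * α)) from rfl, Real.cos_arctan, hsq]
    field_simp
  have hsγ : Real.sin γ = g / S := by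
    rw [show γ = Real.arctan (g / (b * α)) from rfl, Real.sin_arctan, hsq]
    field_simp
  have hy : ∀ w, y w = g / (2 * α) + (S / (2 * α)) * Real.sin (w - γ) := by
    intro w
    show (g - g * Real.cos w) / (2 * α) + (b / 2) * Real.sin w = _
    rw [Real.sin_sub, hcγ, hsγ]
    field_simp
    ring
  set d := (u - us) / 2 with hddef
  set s := (u + us) / 2 - γ with hsdef
  have hdiff : y u - y us = (S / (2 * α)) * (2 * Real.cos s * Real.sin d) := by
    rw [hy u, hy us]
    have h := Real.sin_sub_sin (u - γ) (us - γ)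
    rw [show (u - γ - (us - γ)) / 2 = d by rw [hddef]; ring,
        show (u - γ + (us - γ)) / 2 = s by rw [hsdef]; ring] at h
    rw [show g / (2 * α) + S / (2 * α) * Real.sin (u - γ) -
          (g / (2 * α) + S / (2 * α) * Real.sin (us - γ)) =
          S / (2 * α) * (Real.sin (u - γ) - Real.sin (us - γ)) by ring, h]
    ring
  have hd : |d| ≤ π := by
    rw [abs_le, hddef]
    constructor <;> [linarith; linarith]
  have hsb : |s| ≤ π / 2 := by
    rw [abs_le, hsdef]
    constructor <;> [linarith; linarith]
  have key := key_ineq_7 d s hd hsb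
  have hε : ε = 2 * α / S := rfl
  have hA : (0:ℝ) < S / (2 * α) := by positivity
  rw [hdiff, hε]
  have heq : 2 * α / S * (S / (2 * α) * (2 * Real.cos s * Real.sin d)) ^ 2 =
      S / (2 * α) * (2 * Real.cos s * Real.sin d) ^ 2 := by
    field_simp
  rw [heq, show (u - us) * (S / (2 * α) * (2 * Real.cos s * Real.sin d)) =
      S / (2 * α) * ((2 * d) * (2 * Real.cos s * Real.sin d)) by rw [hddef]; ring]
  exact mul_le_mul_of_nonneg_left key hA.le
end

section
/- Let D ∈ ℝ^{n×n} and E ∈ ℝ^{2m×2m} be positive definite diagonal matrices, Ψ ∈ ℝ^{n×2m}, and σ > 0, τ ∈ ℝ^{n} with τᵢ > 0. If D ≻ (1/4)·Ψ E⁻¹ Ψᵀ and 0 < σ < λ_min(2D - (1/2)·Ψ E⁻¹ Ψᵀ) · min_i τᵢ, then the block matrix [[2D - σ·diag(τ)⁻¹, -Ψ], [-Ψᵀ, 2E]] is positive definite. -/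
/-!
Since `2 • E` is positive definite, the block matrix is positive definite iff its Schur complement
`2 • D - σ • (diagonal τ)⁻¹ - Ψ (2 • E)⁻¹ Ψᵀ = A - σ • (diagonal τ)⁻¹` is. Writing `λ` for the
smallest eigenvalue of `A`, this complement is `(A - λ • 1) + diagonal (λ - σ / τ i)`: the first
summand is positive semidefinite, and the second is positive definite because
`σ / τ i ≤ σ / min τ < λ`.
-/

open Matrix

section
open scoped MatrixOrder ComplexOrder

variable {k m n 𝕜 : Type*} [Fintype k] [Fintype m] [Fintype n] [DecidableEq k] [DecidableEq m]
  [DecidableEq n] [RCLike 𝕜]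

theorem Matrix.IsHermitian.posSemidef_sub_smul_one {A : Matrix k k 𝕜} (hA : A.IsHermitian)
    {c : ℝ} (hc : ∀ i, c ≤ hA.eigenvalues i) : (A - c • (1 : Matrix k k 𝕜)).PosSemidef := by
  rw [← nonneg_iff_posSemidef, sub_nonneg, ← Algebra.algebraMap_eq_smul_one,
    algebraMap_le_iff_le_spectrum hA.isSelfAdjoint, hA.spectrum_real_eq_range_eigenvalues]
  rintro _ ⟨i, rfl⟩
  exact hc i

theorem Matrix.posDef_iff_posSemidef_and_det_ne_zero {M : Matrix k k 𝕜} :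
    M.PosDef ↔ M.PosSemidef ∧ M.det ≠ 0 :=
  ⟨fun h ↦ ⟨h.posSemidef, h.det_pos.ne'⟩, fun h ↦ h.1.posDef_iff_det_ne_zero.mpr h.2⟩

theorem Matrix.posDef_fromBlocks₂₂_iff (A : Matrix m m 𝕜) (B : Matrix m n 𝕜) {D : Matrix n n 𝕜}
    (hD : D.PosDef) [Invertible D] :
    (fromBlocks A B Bᴴ D).PosDef ↔ (A - B * D⁻¹ * Bᴴ).PosDef := by
  rw [posDef_iff_posSemidef_and_det_ne_zero, posDef_iff_posSemidef_and_det_ne_zero,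
    PosDef.fromBlocks₂₂ A B hD, det_fromBlocks₂₂, invOf_eq_nonsing_inv,
    mul_ne_zero_iff_left hD.det_pos.ne']

theorem Matrix.IsHermitian.posDef_sub_smul_inv_diagonal {A : Matrix k k ℝ} (hA : A.IsHermitian)
    {τ : k → ℝ} (hτ : ∀ i, 0 < τ i) {σ : ℝ} (hσ : 0 < σ)
    (h : σ < (⨅ i, hA.eigenvalues i) * ⨅ i, τ i) : (A - σ • (diagonal τ)⁻¹).PosDef := by
  set c := ⨅ i, hA.eigenvalues i
  have hσc : ∀ i, σ / τ i < c := fun i ↦ by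
    have : Nonempty k := ⟨i⟩
    obtain ⟨j, hj⟩ := exists_eq_ciInf_of_finite (f := τ)
    have hji : τ j ≤ τ i := hj ▸ ciInf_le (Finite.bddBelow_range τ) i
    rw [← hj] at h
    have hc : 0 < c := pos_of_mul_pos_left (hσ.trans h) (hτ j).le
    rw [div_lt_iff₀ (hτ i)]
    exact h.trans_le (mul_le_mul_of_nonneg_left hji hc.le)
  have hinv : (diagonal τ)⁻¹ = diagonal τ⁻¹ := inv_eq_right_inv <| by
    rw [diagonal_mul_diagonal, ← diagonal_one]
    exact congrArg diagonal (funext fun i ↦ mul_inv_cancel₀ (hτ i).ne')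
  have hsplit : A - σ • (diagonal τ)⁻¹ = (A - c • 1) + diagonal (fun i ↦ c - σ / τ i) := by
    ext i j
    by_cases hij : i = j <;> simp [hinv, hij, div_eq_mul_inv]
  rw [hsplit]
  exact PosDef.posSemidef_add
    (hA.posSemidef_sub_smul_one fun i ↦ ciInf_le (Finite.bddBelow_range _) i)
    (posDef_diagonal_iff.mpr fun i ↦ sub_pos.mpr (hσc i))

end

theorem stmt_9_general (n m : ℕ) (e : Fin (2 * m) → ℝ)
    (he : ∀ i, 0 < e i)
    (Ψ : Matrix (Fin n) (Fin (2 * m)) ℝ) (σ : ℝ) (τ : Fin n → ℝ)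
    (hτ : ∀ i, 0 < τ i)
    (D : Matrix (Fin n) (Fin n) ℝ)
    (E : Matrix (Fin (2 * m)) (Fin (2 * m)) ℝ) (hE : E = Matrix.diagonal e)
    (A : Matrix (Fin n) (Fin n) ℝ)
    (hA : A = (2 : ℝ) • D - (1 / 2 : ℝ) • (Ψ * E⁻¹ * Ψᵀ))
    (hAh : A.IsHermitian)
    (hσ : 0 < σ) (hσ2 : σ < (⨅ i, hAh.eigenvalues i) * ⨅ i, τ i) :
    (Matrix.fromBlocks ((2 : ℝ) • D - σ • (Matrix.diagonal τ)⁻¹) (-Ψ)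
      (-Ψᵀ) ((2 : ℝ) • E)).PosDef := by
  have hEpos : E.PosDef := hE ▸ posDef_diagonal_iff.mpr he
  have h2E : ((2 : ℝ) • E).PosDef := hEpos.smul two_pos
  have := h2E.isUnit.invertible
  have hschur : (2 : ℝ) • D - σ • (diagonal τ)⁻¹ - -Ψ * ((2 : ℝ) • E)⁻¹ * (-Ψ)ᴴ
      = A - σ • (diagonal τ)⁻¹ := by
    rw [inv_smul E 2 ((isUnit_iff_isUnit_det E).mp hEpos.isUnit), invOf_eq_inv, hA,
      conjTranspose_eq_transpose_of_trivial]
    simp only [Matrix.neg_mul, Matrix.mul_neg, transpose_neg, Matrix.mul_smul, Matrix.smul_mul,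
      Matrix.mul_assoc]
    module
  rw [← conjTranspose_eq_transpose_of_trivial, ← conjTranspose_neg,
    posDef_fromBlocks₂₂_iff _ _ h2E, hschur]
  exact hAh.posDef_sub_smul_inv_diagonal hτ hσ hσ2

theorem stmt_9 (n m : ℕ) (d : Fin n → ℝ) (e : Fin (2 * m) → ℝ)
    (hd : ∀ i, 0 < d i) (he : ∀ i, 0 < e i)
    (Ψ : Matrix (Fin n) (Fin (2 * m)) ℝ) (σ : ℝ) (τ : Fin n → ℝ)
    (hτ : ∀ i, 0 < τ i)
    (D : Matrix (Fin n) (Fin n) ℝ) (hD : D = Matrix.diagonal d)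
    (E : Matrix (Fin (2 * m)) (Fin (2 * m)) ℝ) (hE : E = Matrix.diagonal e)
    (hDdom : (D - (1 / 4 : ℝ) • (Ψ * E⁻¹ * Ψᵀ)).PosDef)
    (A : Matrix (Fin n) (Fin n) ℝ)
    (hA : A = (2 : ℝ) • D - (1 / 2 : ℝ) • (Ψ * E⁻¹ * Ψᵀ))
    (hAh : A.IsHermitian)
    (hσ : 0 < σ) (hσ2 : σ < (⨅ i, hAh.eigenvalues i) * ⨅ i, τ i) :
    (Matrix.fromBlocks ((2 : ℝ) • D - σ • (Matrix.diagonal τ)⁻¹) (-Ψ)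
      (-Ψᵀ) ((2 : ℝ) • E)).PosDef :=
  stmt_9_general n m e he Ψ σ τ hτ D E hE A hA hAh hσ hσ2
end
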